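/- Suppose S₀ ⊆ S_k and (X⁽ᵏ⁾_{S_k})ᵀX⁽ᵏ⁾_{S_k} is invertible for every k ∈ [K], and (X⁽⁰⁾_{S₀})ᵀX⁽⁰⁾_{S₀} is invertible. Then X̃_{S₀}ᵀX̃_{S₀} = (X⁽⁰⁾_{S₀})ᵀX⁽⁰⁾_{S₀} and the oracle estimator reduces to the target-only least squares estimator: β̂_{ora,S₀} = [(X⁽⁰⁾_{S₀})ᵀX⁽⁰⁾_{S₀}]⁻¹(X⁽⁰⁾_{S₀})ᵀ y⁽⁰⁾ and β̂_{ora,S₀ᶜ} = 0, i.e., when every source is completely non-transferable in the sense that S₀ ⊂ S_k for all k, no source information enters the oracle estimate of β⁽⁰⁾. -/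
import Mathlib


/-!
STATEMENT 11: If `S₀ ⊆ S_k` and `(X⁽ᵏ⁾_{S_k})ᵀX⁽ᵏ⁾_{S_k}` is invertible for every `k ∈ [K]`,
and `(X⁽⁰⁾_{S₀})ᵀX⁽⁰⁾_{S₀}` is invertible, then `X̃_{S₀}ᵀX̃_{S₀} = (X⁽⁰⁾_{S₀})ᵀX⁽⁰⁾_{S₀}` and
the oracle estimator reduces to the target-only least squares estimator:
`β̂_{ora,S₀} = [(X⁽⁰⁾_{S₀})ᵀX⁽⁰⁾_{S₀}]⁻¹(X⁽⁰⁾_{S₀})ᵀ y⁽⁰⁾` and `β̂_{ora,S₀ᶜ} = 0`,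
where (by Proposition 1) `β̂_{ora,S₀} = [X̃_{S₀}ᵀX̃_{S₀}]⁻¹X̃_{S₀}ᵀ y` with `y` the stack of
`y⁽⁰⁾, …, y⁽ᴷ⁾`.
-/

open Matrix Finset

/-- The column-submatrix of `A` indexed by the set `S`. -/
noncomputable def colSub {n p : ℕ} (A : Matrix (Fin n) (Fin p) ℝ) (S : Finset (Fin p)) :
    Matrix (Fin n) {j // j ∈ S} ℝ :=
  Matrix.of fun i j => A i (j : Fin p)

/-- The projection matrix `H⁽ᵏ⁾` onto the column space of `X⁽ᵏ⁾_{S_k}`. -/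
noncomputable def projMat {nS p : ℕ} (Xk : Matrix (Fin nS) (Fin p) ℝ) (Sk : Finset (Fin p)) :
    Matrix (Fin nS) (Fin nS) ℝ :=
  colSub Xk Sk * ((colSub Xk Sk)ᵀ * colSub Xk Sk)⁻¹ * (colSub Xk Sk)ᵀ

/-- `X̃⁽ᵏ⁾_{S₀} := (I − H⁽ᵏ⁾)X⁽ᵏ⁾_{S₀}`. -/
noncomputable def Xtilde {nS p : ℕ} (Xk : Matrix (Fin nS) (Fin p) ℝ)
    (S0 Sk : Finset (Fin p)) : Matrix (Fin nS) {j // j ∈ S0} ℝ :=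
  (1 - projMat Xk Sk) * colSub Xk S0

/-- Vertical stack of a target block and `K` source blocks. -/
def stackM {K nT nS : ℕ} {q : Type*} (A0 : Matrix (Fin nT) q ℝ)
    (As : Fin K → Matrix (Fin nS) q ℝ) : Matrix (Fin nT ⊕ Fin K × Fin nS) q ℝ :=
  Matrix.of fun i j => Sum.elim (fun a => A0 a j) (fun ki => As ki.1 ki.2 j) i

/-- Vertical stack of a target vector and `K` source vectors. -/
def stackV {K nT nS : ℕ} (v0 : Fin nT → ℝ) (vs : Fin K → Fin nS → ℝ) :
    Fin nT ⊕ Fin K × Fin nS → ℝ :=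
  Sum.elim v0 fun ki => vs ki.1 ki.2

/-- `X̃_{S₀}`: the vertical stack of `X⁽⁰⁾_{S₀}, X̃⁽¹⁾_{S₀}, …, X̃⁽ᴷ⁾_{S₀}`. -/
noncomputable def XtildeStack {K nT nS p : ℕ} (X0 : Matrix (Fin nT) (Fin p) ℝ)
    (Xs : Fin K → Matrix (Fin nS) (Fin p) ℝ) (S0 : Finset (Fin p))
    (Ss : Fin K → Finset (Fin p)) : Matrix (Fin nT ⊕ Fin K × Fin nS) {j // j ∈ S0} ℝ :=
  stackM (colSub X0 S0) fun k => Xtilde (Xs k) S0 (Ss k)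


lemma colSub_factor {n p : ℕ} (X : Matrix (Fin n) (Fin p) ℝ) {S0 Sk : Finset (Fin p)}
    (h : S0 ⊆ Sk) :
    colSub X S0 = colSub X Sk *
      (Matrix.of fun (i : {j // j ∈ Sk}) (j : {j // j ∈ S0}) =>
        if (i : Fin p) = (j : Fin p) then (1 : ℝ) else 0) := by
  ext i j
  simp only [Matrix.mul_apply, Matrix.of_apply, colSub, Matrix.of_apply]
  rw [Finset.sum_eq_single (⟨(j : Fin p), h j.2⟩ : {j // j ∈ Sk})]
  · simp
  · intro b _ hb
    rw [if_neg, mul_zero]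
    intro hc
    exact hb (Subtype.ext hc)
  · intro hmem; exact absurd (Finset.mem_univ _) hmem

lemma Xtilde_eq_zero {nS p : ℕ} (Xk : Matrix (Fin nS) (Fin p) ℝ)
    {S0 Sk : Finset (Fin p)} (h : S0 ⊆ Sk)
    (hinv : IsUnit ((colSub Xk Sk)ᵀ * colSub Xk Sk).det) :
    Xtilde Xk S0 Sk = 0 := by
  have hproj : projMat Xk Sk * colSub Xk Sk = colSub Xk Sk := by
    unfold projMat
    rw [Matrix.mul_assoc, Matrix.mul_assoc,
      Matrix.nonsing_inv_mul _ hinv, Matrix.mul_one]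
  unfold Xtilde
  rw [colSub_factor Xk h, Matrix.sub_mul, Matrix.one_mul, ← Matrix.mul_assoc, hproj, sub_self]

theorem statement_11 {K nT nS p : ℕ}
    (X0 : Matrix (Fin nT) (Fin p) ℝ) (Xs : Fin K → Matrix (Fin nS) (Fin p) ℝ)
    (y0 : Fin nT → ℝ) (ys : Fin K → Fin nS → ℝ)
    (S0 : Finset (Fin p)) (Ss : Fin K → Finset (Fin p))
    (hsub : ∀ k, S0 ⊆ Ss k)
    (hinvk : ∀ k, IsUnit ((colSub (Xs k) (Ss k))ᵀ * colSub (Xs k) (Ss k)).det)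
    (hinv0 : IsUnit ((colSub X0 S0)ᵀ * colSub X0 S0).det) :
    -- the Gram matrix of X̃_{S₀} reduces to the target-only Gram matrix
    (XtildeStack X0 Xs S0 Ss)ᵀ * XtildeStack X0 Xs S0 Ss = (colSub X0 S0)ᵀ * colSub X0 S0 ∧
    -- and the oracle estimator reduces to the target-only least squares estimator
    (((XtildeStack X0 Xs S0 Ss)ᵀ * XtildeStack X0 Xs S0 Ss)⁻¹
        * (XtildeStack X0 Xs S0 Ss)ᵀ) *ᵥ stackV y0 ys
      = (((colSub X0 S0)ᵀ * colSub X0 S0)⁻¹ * (colSub X0 S0)ᵀ) *ᵥ y0 := by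
  have hz : ∀ k, Xtilde (Xs k) S0 (Ss k) = 0 := fun k =>
    Xtilde_eq_zero (Xs k) (hsub k) (hinvk k)
  have hgram : (XtildeStack X0 Xs S0 Ss)ᵀ * XtildeStack X0 Xs S0 Ss
      = (colSub X0 S0)ᵀ * colSub X0 S0 := by
    ext i j
    simp [XtildeStack, stackM, Matrix.mul_apply, Matrix.transpose_apply,
      Fintype.sum_sum_type, hz]
  refine ⟨hgram, ?_⟩
  have hvec : (XtildeStack X0 Xs S0 Ss)ᵀ *ᵥ stackV y0 ys = (colSub X0 S0)ᵀ *ᵥ y0 := by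
    ext j
    simp [XtildeStack, stackM, stackV, Matrix.mulVec, Matrix.transpose_apply,
      dotProduct, Fintype.sum_sum_type, hz]
  rw [hgram, ← Matrix.mulVec_mulVec, hvec, Matrix.mulVec_mulVec]
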